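/- Suppose an operator G : ℝ^{Md} → ℝ^{Md} is given by G(μ) = μ + s∇Q(μ|μ) where ∇q(μ) = (diag(π)⊗I_d)(μ* − μ), s = 2/(π_min + π_max), and the gradient stability bound ‖∇Q(μ|μ) − ∇q(μ)‖ ≤ γ‖μ − μ*‖ holds for all μ in a set containing the iterates, with 0 < γ < π_min. Then the iterates μ^{t+1} = G(μ^t) satisfy ‖μ^t − μ*‖ ≤ ζ^t ‖μ^0 − μ*‖ with ζ = (π_max − π_min + 2γ)/(π_max + π_min) < 1. -/

import Mathlib

/-! The step `μ ↦ μ + s ∇q(μ)` multiplies block `i` of the error `μ − μ*` by `1 − s πᵢ`, and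
the step size `s = 2/(π_min + π_max)` makes all these factors at most
`κ = (π_max − π_min)/(π_max + π_min)` in absolute value. The actual step differs from it by
`s (∇Q(μ|μ) − ∇q(μ))`, of norm at most `s γ ‖μ − μ*‖`, so by the triangle inequality each
iteration contracts the error by `κ + s γ = ζ`. -/

section PiLp

variable {ι : Type*} [Fintype ι] {E : ι → Type*} [∀ i, SeminormedAddCommGroup (E i)]
  [∀ i, NormedSpace ℝ (E i)]

theorem PiLp.norm_toLp_smul_le (a : ι → ℝ) {c : ℝ} (ha : ∀ i, |a i| ≤ c) (x : PiLp 2 E) :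
    ‖(WithLp.toLp 2 fun i => a i • x i : PiLp 2 E)‖ ≤ c * ‖x‖ := by
  obtain _ | ⟨⟨i₀⟩⟩ := isEmpty_or_nonempty ι
  · simp [PiLp.norm_eq_of_L2]
  have hc : 0 ≤ c := (abs_nonneg _).trans (ha i₀)
  refine (pow_le_pow_iff_left₀ (norm_nonneg _) (by positivity) two_ne_zero).mp ?_
  rw [mul_pow, PiLp.norm_sq_eq_of_L2, PiLp.norm_sq_eq_of_L2, Finset.mul_sum]
  gcongr with i
  rw [norm_smul, mul_pow, Real.norm_eq_abs]
  gcongr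
  exact ha i

/-- The paper's `∇q(μ) = (diag(w) ⊗ I_d)(μ* − μ)`. -/
def diagGrad (w : ι → ℝ) (μs μ : PiLp 2 E) : PiLp 2 E :=
  WithLp.toLp 2 fun i => w i • (μs i - μ i)

theorem norm_add_smul_sub_le_of_norm_sub_diagGrad_le (w : ι → ℝ) {s c γ : ℝ} (hs : 0 ≤ s)
    (hc : ∀ i, |1 - s * w i| ≤ c) (μ μs g : PiLp 2 E)
    (hg : ‖g - diagGrad w μs μ‖ ≤ γ * ‖μ - μs‖) :
    ‖μ + s • g - μs‖ ≤ (c + s * γ) * ‖μ - μs‖ := by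
  have hsplit : μ + s • g - μs = (WithLp.toLp 2 fun i => (1 - s * w i) • (μ - μs) i : PiLp 2 E)
      + s • (g - diagGrad w μs μ) := by
    ext i : 1
    simp only [diagGrad, PiLp.add_apply, PiLp.sub_apply, PiLp.smul_apply]
    module
  calc ‖μ + s • g - μs‖
      ≤ c * ‖μ - μs‖ + s * (γ * ‖μ - μs‖) := by
        rw [hsplit]
        refine (norm_add_le _ _).trans (add_le_add (PiLp.norm_toLp_smul_le _ hc _) ?_)
        rw [norm_smul, Real.norm_of_nonneg hs]
        exact mul_le_mul_of_nonneg_left hg hs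
    _ = (c + s * γ) * ‖μ - μs‖ := by ring

end PiLp

theorem abs_one_sub_div_add_mul_le {m L w : ℝ} (hmL : 0 < m + L) (hmw : m ≤ w) (hwL : w ≤ L) :
    |1 - 2 / (m + L) * w| ≤ (L - m) / (L + m) := by
  rw [add_comm L m, show 1 - 2 / (m + L) * w = (m + L - 2 * w) / (m + L) by field_simp,
    abs_div, abs_of_pos hmL, div_le_div_iff_of_pos_right hmL, abs_le]
  constructor <;> linarith

theorem stmt17_general (d M : ℕ) (πmin πmax γ : ℝ) (hle : πmin ≤ πmax)
    (hγ0 : 0 < γ) (hγ : γ < πmin)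
    (w : Fin M → ℝ) (hw : ∀ i, πmin ≤ w i ∧ w i ≤ πmax)
    (GQ : (PiLp 2 fun _ : Fin M => EuclideanSpace ℝ (Fin d)) →
          PiLp 2 fun _ : Fin M => EuclideanSpace ℝ (Fin d))
    (μs : PiLp 2 fun _ : Fin M => EuclideanSpace ℝ (Fin d))
    (μseq : ℕ → PiLp 2 fun _ : Fin M => EuclideanSpace ℝ (Fin d))
    (hiter : ∀ t, μseq (t + 1) = μseq t + (2 / (πmin + πmax)) • GQ (μseq t))
    (hstab : ∀ t, ‖GQ (μseq t) -
        (show PiLp 2 fun _ : Fin M => EuclideanSpace ℝ (Fin d) from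
          WithLp.toLp 2 fun i => w i • (μs i - μseq t i))‖ ≤ γ * ‖μseq t - μs‖) :
    (πmax - πmin + 2 * γ) / (πmax + πmin) < 1 ∧
    ∀ t, ‖μseq t - μs‖ ≤ ((πmax - πmin + 2 * γ) / (πmax + πmin)) ^ t * ‖μseq 0 - μs‖ := by
  have hπ : 0 < πmin + πmax := by linarith
  have hζ : (πmax - πmin + 2 * γ) / (πmax + πmin)
      = (πmax - πmin) / (πmax + πmin) + 2 / (πmin + πmax) * γ := by
    rw [add_comm πmin πmax]; ring
  refine ⟨(div_lt_one (by linarith)).2 (by linarith), fun t => ?_⟩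
  refine le_geom (u := fun t => ‖μseq t - μs‖) (div_nonneg (by linarith) (by linarith)) t
    fun k _ => ?_
  rw [hiter k, hζ]
  exact norm_add_smul_sub_le_of_norm_sub_diagGrad_le w (by positivity)
    (fun i => abs_one_sub_div_add_mul_le hπ (hw i).1 (hw i).2) (μseq k) μs _ (hstab k)

/-- Convergence of population gradient EM: if `G(μ) = μ + s∇Q(μ|μ)` with
`s = 2/(π_min + π_max)`, `∇q(μ)ᵢ = πᵢ(μᵢ* − μᵢ)` and the gradient stability
bound `‖∇Q(μ|μ) − ∇q(μ)‖ ≤ γ‖μ − μ*‖` holds along the iterates with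
`0 < γ < π_min`, then `‖μ^t − μ*‖ ≤ ζ^t ‖μ^0 − μ*‖` with
`ζ = (π_max − π_min + 2γ)/(π_max + π_min) < 1`. -/
theorem stmt17 (d M : ℕ) (πmin πmax γ : ℝ) (hmin : 0 < πmin) (hle : πmin ≤ πmax)
    (hγ0 : 0 < γ) (hγ : γ < πmin)
    (w : Fin M → ℝ) (hw : ∀ i, πmin ≤ w i ∧ w i ≤ πmax)
    (GQ : (PiLp 2 fun _ : Fin M => EuclideanSpace ℝ (Fin d)) →
          PiLp 2 fun _ : Fin M => EuclideanSpace ℝ (Fin d))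
    (μs : PiLp 2 fun _ : Fin M => EuclideanSpace ℝ (Fin d))
    (μseq : ℕ → PiLp 2 fun _ : Fin M => EuclideanSpace ℝ (Fin d))
    (hiter : ∀ t, μseq (t + 1) = μseq t + (2 / (πmin + πmax)) • GQ (μseq t))
    (hstab : ∀ t, ‖GQ (μseq t) -
        (show PiLp 2 fun _ : Fin M => EuclideanSpace ℝ (Fin d) from
          WithLp.toLp 2 fun i => w i • (μs i - μseq t i))‖ ≤ γ * ‖μseq t - μs‖) :
    (πmax - πmin + 2 * γ) / (πmax + πmin) < 1 ∧
    ∀ t, ‖μseq t - μs‖ ≤ ((πmax - πmin + 2 * γ) / (πmax + πmin)) ^ t * ‖μseq 0 - μs‖ :=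
  stmt17_general d M πmin πmax γ hle hγ0 hγ w hw GQ μs μseq hiter hstab
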